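/- Let X be a finite pure simplicial complex of dimension at least 2, let G be a group acting on a finite nonempty set S, and let φ ∈ C¹(X;G). Then m_f(Y_φ) ≤ ‖d₁φ‖, where f:Y_φ→X is the projection map. -/

import Mathlib

open Finset

variable {V : Type*} [DecidableEq V]

/-- A finite abstract simplicial complex on vertex type `V`. -/
structure SComplex (V : Type*) [DecidableEq V] where
  faces : Finset (Finset V)
  nonempty_of_mem : ∀ σ ∈ faces, σ.Nonempty
  down_closed : ∀ σ ∈ faces, ∀ τ ⊆ σ, τ.Nonempty → τ ∈ faces

namespace SComplex

/-- The set `X(k)` of `k`-dimensional simplices (cardinality `k+1`). -/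
def simps (X : SComplex V) (k : ℕ) : Finset (Finset V) :=
  X.faces.filter fun σ => σ.card = k + 1

/-- The number of vertices of a top-dimensional face. -/
def rank (X : SComplex V) : ℕ := X.faces.sup Finset.card

/-- The weight `c_X(σ)`. -/
noncomputable def weight (X : SComplex V) (σ : Finset V) : ℝ :=
  (((X.simps (X.rank - 1)).filter fun τ => σ ⊆ τ).card : ℝ) /
    ((X.rank.choose σ.card) * ((X.simps (X.rank - 1)).card))

/-- `X` is pure of dimension `n-1` : every face is contained in a face with `n` vertices. -/
def IsPureOfRank (X : SComplex V) (n : ℕ) : Prop :=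
  X.faces.Nonempty ∧ ∀ σ ∈ X.faces, ∃ τ ∈ X.faces, σ ⊆ τ ∧ τ.card = n

/-- The link `lk(X,σ)`. -/
def lk (X : SComplex V) (σ : Finset V) : SComplex V where
  faces := X.faces.filter fun η => η ∪ σ ∈ X.faces ∧ Disjoint η σ
  nonempty_of_mem := fun η hη => X.nonempty_of_mem η (mem_filter.mp hη).1
  down_closed := by
    intro η hη τ hτη hτ
    rw [mem_filter] at hη ⊢
    refine ⟨X.down_closed η hη.1 τ hτη hτ,
      X.down_closed (η ∪ σ) hη.2.1 (τ ∪ σ) (union_subset_union_left hτη) ?_,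
      hη.2.2.mono_left hτη⟩
    exact hτ.mono subset_union_left

/-- The star `st(X,σ)`. -/
def star (X : SComplex V) (σ : Finset V) : Finset (Finset V) :=
  X.faces.filter fun τ => τ ∪ σ ∈ X.faces

/-- The vertices of `X`. -/
def verts (X : SComplex V) [Fintype V] : Finset V :=
  Finset.univ.filter fun v => ({v} : Finset V) ∈ X.faces

end SComplex
section Cochains

variable {G : Type*} [Group G]

/-- `φ ∈ C¹(X;G)`: an antisymmetric `G`-valued function on ordered pairs. -/
def IsCochain (G : Type*) [Group G] (φ : V → V → G) : Prop :=
  ∀ u v : V, φ u v = (φ v u)⁻¹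

/-- The coboundary `d₁φ(u,v,w) = φ(u,v)φ(v,w)φ(w,u)`. -/
def d1 (φ : V → V → G) (u v w : V) : G := φ u v * φ v w * φ w u

/-- `φ ∈ Z¹(X;G)`: a cochain all of whose triangle equations hold. -/
def IsCocycle (X : SComplex V) (φ : V → V → G) : Prop :=
  IsCochain G φ ∧ ∀ u v w : V, ({u, v, w} : Finset V) ∈ X.simps 2 → d1 φ u v w = 1

open Classical in
/-- The norm `‖φ‖`: total weight of the support of `φ`. -/
noncomputable def norm1 (X : SComplex V) (φ : V → V → G) : ℝ :=
  ∑ e ∈ (X.simps 1).filter (fun e => ∃ u v : V, e = {u, v} ∧ φ u v ≠ 1), X.weight e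

open Classical in
/-- The norm `‖d₁φ‖`: total weight of the 2-simplices whose equation is violated. -/
noncomputable def normD1 (X : SComplex V) (φ : V → V → G) : ℝ :=
  ∑ τ ∈ (X.simps 2).filter (fun τ => ∃ u v w : V, τ = {u, v, w} ∧ d1 φ u v w ≠ 1), X.weight τ

/-- `dist(φ,ψ) = ‖φψ⁻¹‖`. -/
noncomputable def dist1 (X : SComplex V) (φ ψ : V → V → G) : ℝ :=
  norm1 X (fun u v => φ u v * (ψ u v)⁻¹)

/-- The cosystolic norm `‖φ‖_csy`: the distance from `φ` to `Z¹(X;G)`. -/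
noncomputable def csyNorm (X : SComplex V) (φ : V → V → G) : ℝ :=
  sInf {d : ℝ | ∃ ψ : V → V → G, IsCocycle X ψ ∧ d = dist1 X φ ψ}

/-- The cosystolic expansion `h₁(X;G)`. -/
noncomputable def h1 (X : SComplex V) (G : Type*) [Group G] : ℝ :=
  sInf {r : ℝ | ∃ φ : V → V → G, IsCochain G φ ∧ ¬ IsCocycle X φ ∧
    r = normD1 X φ / csyNorm X φ}

end Cochains

section Fix

variable (G : Type*) [Group G] (S : Type*) [Fintype S] [MulAction G S]

open Classical in
/-- `fix(g) = |{s ∈ S : g•s = s}|`. -/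
noncomputable def fixCard (g : G) : ℕ :=
  (Finset.univ.filter fun s : S => g • s = s).card

/-- `Fix_G(S) = max_{g ≠ 1} fix(g)`. -/
noncomputable def FixG : ℕ :=
  sSup {k : ℕ | ∃ g : G, g ≠ 1 ∧ fixCard G S g = k}

end Fix
section Ycomplex

variable {G : Type*} [Group G] {S : Type*} [Fintype S] [DecidableEq S] [MulAction G S]
variable [Fintype V]

open Classical in
/-- The complex `Y_φ` associated to a cochain `φ`, together with the projection
`Prod.fst : Y_φ → X`. -/
noncomputable def Ycomplex (X : SComplex V) (φ : V → V → G) (S : Type*)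
    [Fintype S] [DecidableEq S] [MulAction G S] : SComplex (V × S) where
  faces := Finset.univ.filter fun σ : Finset (V × S) =>
    σ.image Prod.fst ∈ X.faces ∧ (σ.image Prod.fst).card = σ.card ∧
    ∀ p ∈ σ, ∀ q ∈ σ, p.1 ≠ q.1 → p.2 = φ p.1 q.1 • q.2
  nonempty_of_mem := by
    intro σ hσ
    rw [Finset.mem_filter] at hσ
    exact Finset.image_nonempty.mp (X.nonempty_of_mem _ hσ.2.1)
  down_closed := by
    intro σ hσ τ hτσ hτ
    rw [Finset.mem_filter] at hσ ⊢
    obtain ⟨-, h1, h2, h3⟩ := hσ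
    refine ⟨Finset.mem_univ _,
      X.down_closed _ h1 _ (Finset.image_subset_image hτσ) (Finset.image_nonempty.mpr hτ),
      ?_, fun p hp q hq => h3 p (hτσ hp) q (hτσ hq)⟩
    exact Finset.card_image_iff.mpr ((Finset.card_image_iff.mp h2).mono hτσ)

end Ycomplex

section Deficiency

variable {W : Type*} [DecidableEq W] [Fintype W] [Fintype V]

open Classical in
/-- `D_f(ut)`: the edges in the link of `f(ut)` that are not covered by the image of the
link of `ut`. -/
noncomputable def Dset (Y : SComplex W) (X : SComplex V) (f : W → V) (ut : W) :
    Finset (Finset V) :=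
  ((X.lk {f ut}).simps 1).filter fun e => ¬ ∃ η ∈ (Y.lk {ut}).faces, η.image f = e

/-- The local deficiency `μ_f(ut)`. -/
noncomputable def locDef (Y : SComplex W) (X : SComplex V) (f : W → V) (ut : W) : ℝ :=
  ∑ e ∈ Dset Y X f ut, (X.lk {f ut}).weight e

open Classical in
/-- The deficiency `m_f(Y)` of a map `f : Y → X`. -/
noncomputable def deficiency (Y : SComplex W) (X : SComplex V) (f : W → V) : ℝ :=
  ∑ u ∈ X.verts, (X.weight {u} / ((Y.verts.filter fun w => f w = u).card : ℝ)) *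
    ∑ ut ∈ Y.verts.filter (fun w => f w = u), locDef Y X f ut

end Deficiency
section MapOver

variable [Fintype V]

/-- An element of `M(X;G,S)`: a surjective simplicial `|S|`-to-`1` map onto `X` whose
vertex fibers are identified with `S` and whose edge fibers are matchings given by the
action of elements of `G`. -/
structure MapOver (X : SComplex V) (G : Type*) (S : Type*) [Group G] [Fintype S]
    [DecidableEq S] [MulAction G S] [Fintype V] where
  Y : SComplex (V × S)
  simplicial : ∀ τ ∈ Y.faces, τ.image Prod.fst ∈ X.faces
  injOnFaces : ∀ τ ∈ Y.faces, (τ.image Prod.fst).card = τ.card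
  surj : ∀ σ ∈ X.faces, ∃ τ ∈ Y.faces, τ.image Prod.fst = σ
  fiber : ∀ p : V × S, ({p} : Finset (V × S)) ∈ Y.faces ↔ ({p.1} : Finset V) ∈ X.faces
  edges : ∀ u v : V, ({u, v} : Finset V) ∈ X.simps 1 → ∃ g : G,
    ∀ s t : S, (({(u, s), (v, t)} : Finset (V × S)) ∈ Y.faces ↔ s = g • t)

variable {G : Type*} [Group G] {S : Type*} [Fintype S] [DecidableEq S] [MulAction G S]

open Classical in
/-- The set of edges of `Y` lying over a given edge of the base. -/
noncomputable def edgeFiber (Y : SComplex (V × S)) (e : Finset V) :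
    Finset (Finset (V × S)) :=
  (Y.simps 1).filter fun e' => e'.image Prod.fst = e

open Classical in
/-- The distance between two elements of `M(X;G,S)`: the weight of the set of edges of
`X` over which the two edge fibers differ. -/
noncomputable def mdist (X : SComplex V) (M₁ M₂ : MapOver X G S) : ℝ :=
  ∑ e ∈ (X.simps 1).filter (fun e => edgeFiber M₁.Y e ≠ edgeFiber M₂.Y e), X.weight e

/-- The distance from an element of `M(X;G,S)` to the set `M₀(X;G,S)` of genuine covers. -/
noncomputable def distToCovers (X : SComplex V) (M : MapOver X G S) : ℝ :=
  sInf {d : ℝ | ∃ M' : MapOver X G S, deficiency M'.Y X Prod.fst = 0 ∧ d = mdist X M M'}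

/-- The `(G,S)`-cover-stability `c(X;G,S)`. -/
noncomputable def coverStability (X : SComplex V) (G : Type*) (S : Type*) [Group G]
    [Fintype S] [DecidableEq S] [MulAction G S] : ℝ :=
  sInf {r : ℝ | ∃ M : MapOver X G S, deficiency M.Y X Prod.fst ≠ 0 ∧
    r = deficiency M.Y X Prod.fst / distToCovers X M}

end MapOver
section Paths

/-- A (possibly closed) edge path in a complex: consecutive vertices span edges. -/
def IsEdgePath (K : SComplex V) (p : List V) : Prop :=
  (∀ v ∈ p, ({v} : Finset V) ∈ K.faces) ∧
    p.Chain' fun u v => ({u, v} : Finset V) ∈ K.faces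

/-- Combinatorial homotopy of edge paths, generated by erasing repetitions and by
collapsing across simplices. -/
inductive Homotopic (K : SComplex V) : List V → List V → Prop
  | refl (p : List V) : Homotopic K p p
  | symm {p q : List V} : Homotopic K p q → Homotopic K q p
  | trans {p q r : List V} : Homotopic K p q → Homotopic K q r → Homotopic K p r
  | collapse (p q : List V) (a b c : V) (h : ({a, b, c} : Finset V) ∈ K.faces) :
      Homotopic K (p ++ a :: b :: c :: q) (p ++ a :: c :: q)
  | dedup (p q : List V) (a : V) : Homotopic K (p ++ a :: a :: q) (p ++ a :: q)

/-- `K` is connected: any two vertices are joined by an edge path. -/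
def SComplexConnected (K : SComplex V) : Prop :=
  ∀ u v : V, ({u} : Finset V) ∈ K.faces → ({v} : Finset V) ∈ K.faces →
    ∃ p : List V, IsEdgePath K p ∧ p.head? = some u ∧ p.getLast? = some v

/-- `K` is simply connected: connected, and every closed edge path is null-homotopic. -/
def SimplyConnected (K : SComplex V) : Prop :=
  SComplexConnected K ∧
    ∀ (p : List V) (a : V), IsEdgePath K p → p.head? = some a → p.getLast? = some a →
      Homotopic K p [a]

end Paths

section OrderComplex

open Classical in
/-- The order complex of `L ∖ {⊥, ⊤}`: simplices are the nonempty chains avoiding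
`⊥` and `⊤`. -/
noncomputable def orderComplex (L : Type*) [Lattice L] [BoundedOrder L] [Fintype L]
    [DecidableEq L] : SComplex L where
  faces := Finset.univ.filter fun σ : Finset L =>
    σ.Nonempty ∧ (∀ x ∈ σ, x ≠ ⊥ ∧ x ≠ ⊤) ∧ ∀ x ∈ σ, ∀ y ∈ σ, x ≤ y ∨ y ≤ x
  nonempty_of_mem := fun σ hσ => (Finset.mem_filter.mp hσ).2.1
  down_closed := by
    intro σ hσ τ hτσ hτ
    rw [Finset.mem_filter] at hσ ⊢
    exact ⟨Finset.mem_univ _, hτ, fun x hx => hσ.2.2.1 x (hτσ hx),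
      fun x hx y hy => hσ.2.2.2 x (hτσ hx) y (hτσ hy)⟩

end OrderComplex
section Building

variable (F : Type*) [Field F] [Fintype F]

noncomputable instance : Fintype (Submodule F (Fin 4 → F)) := by
  have : Finite (Submodule F (Fin 4 → F)) :=
    Finite.of_injective (fun N => (N : Set (Fin 4 → F))) SetLike.coe_injective
  exact Fintype.ofFinite _

noncomputable instance : DecidableEq (Submodule F (Fin 4 → F)) := Classical.decEq _

/-- The spherical building `A₃(F_q)`: the order complex of the poset of nontrivial proper
linear subspaces of `F_q⁴`. -/
noncomputable def A3 : SComplex (Submodule F (Fin 4 → F)) :=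
  orderComplex (Submodule F (Fin 4 → F))

end Building
section FixEdge

variable {G : Type*} [Group G]

open Classical in
/-- The value `fix(d₁φ(u,v₁,v₂))` for an unordered edge `e = {v₁,v₂}` of the link of `u`
(well defined for cochains, since `fix` is invariant under inversion and conjugation). -/
noncomputable def fixEdge (S : Type*) [Fintype S] [MulAction G S] (φ : V → V → G)
    (u : V) (e : Finset V) : ℕ :=
  sSup {k : ℕ | ∃ v₁ ∈ e, ∃ v₂ ∈ e, v₁ ≠ v₂ ∧ k = fixCard G S (d1 φ u v₁ v₂)}

end FixEdge

/-!
At a vertex `(u, s)` of `Y_φ`, an edge `{v, w}` of `lk(X, u)` lifts as soon as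
`d₁φ(u, v, w) = 1`: label `v` and `w` by `φ(v, u)•s` and `φ(w, u)•s`. Hence `μ_f(u, s)` is at most
the `lk(X, u)`-weight of the edges `{v, w}` with `d₁φ(u, v, w) ≠ 1`. In a pure complex
`c_X(u) · c_{lk(X,u)}(e) = c_X(u ∪ e) / 3` for every edge `e` of `lk(X, u)`, and every triangle
on which `d₁φ` is nontrivial arises in this way from each of its three vertices, so these bounds
add up to exactly `‖d₁φ‖`.
-/

namespace SComplex

variable {X : SComplex V} {n : ℕ} {u : V} {σ e : Finset V}

lemma mem_simps {k : ℕ} : σ ∈ X.simps k ↔ σ ∈ X.faces ∧ σ.card = k + 1 := mem_filter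

lemma mem_verts [Fintype V] : u ∈ X.verts ↔ {u} ∈ X.faces := by simp [verts]

lemma weight_nonneg (σ : Finset V) : 0 ≤ X.weight σ := by
  unfold weight
  positivity

lemma mem_lk_singleton : e ∈ (X.lk {u}).faces ↔ e.Nonempty ∧ u ∉ e ∧ insert u e ∈ X.faces := by
  simp only [lk, mem_filter, union_singleton, disjoint_singleton_right]
  exact ⟨fun ⟨he, hue, hu⟩ => ⟨X.nonempty_of_mem e he, hu, hue⟩,
    fun ⟨hne, hu, hue⟩ => ⟨X.down_closed _ hue e (subset_insert u e) hne, hue, hu⟩⟩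

lemma erase_mem_lk_singleton (hσ : σ ∈ X.faces) (hu : u ∈ σ) (hcard : 2 ≤ σ.card) :
    σ.erase u ∈ (X.lk {u}).faces := by
  refine mem_lk_singleton.mpr ⟨?_, notMem_erase u σ, by rwa [insert_erase hu]⟩
  rw [← card_pos, card_erase_of_mem hu]
  omega

lemma IsPureOfRank.card_le (hX : X.IsPureOfRank n) (hσ : σ ∈ X.faces) : σ.card ≤ n := by
  obtain ⟨τ, -, hστ, rfl⟩ := hX.2 σ hσ
  exact card_le_card hστ

lemma IsPureOfRank.rank_eq (hX : X.IsPureOfRank n) : X.rank = n := by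
  obtain ⟨σ, hσ⟩ := hX.1
  obtain ⟨τ, hτ, -, rfl⟩ := hX.2 σ hσ
  exact le_antisymm (Finset.sup_le fun σ hσ => hX.card_le hσ) (le_sup hτ)

lemma IsPureOfRank.lk_singleton (hX : X.IsPureOfRank n) (hu : {u} ∈ X.faces) (hn : 2 ≤ n) :
    (X.lk {u}).IsPureOfRank (n - 1) := by
  have top_erase : ∀ τ ∈ X.faces, u ∈ τ → τ.card = n →
      τ.erase u ∈ (X.lk {u}).faces ∧ (τ.erase u).card = n - 1 := fun τ hτ huτ hcard =>
    ⟨erase_mem_lk_singleton hτ huτ (by omega), by rw [card_erase_of_mem huτ, hcard]⟩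
  refine ⟨?_, fun η hη => ?_⟩
  · obtain ⟨τ, hτ, huτ, hcard⟩ := hX.2 _ hu
    exact ⟨τ.erase u, (top_erase τ hτ (singleton_subset_iff.mp huτ) hcard).1⟩
  · obtain ⟨-, huη, hη⟩ := mem_lk_singleton.mp hη
    obtain ⟨τ, hτ, hητ, hcard⟩ := hX.2 _ hη
    refine ⟨τ.erase u, (top_erase τ hτ (hητ (mem_insert_self u η)) hcard).1, ?_,
      (top_erase τ hτ (hητ (mem_insert_self u η)) hcard).2⟩
    exact subset_erase.mpr ⟨(subset_insert u η).trans hητ, huη⟩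

lemma card_filter_simps_lk_singleton (hue : u ∉ e) (k : ℕ) :
    ((X.lk {u}).simps k |>.filter (e ⊆ ·)).card =
      ((X.simps (k + 1)).filter (insert u e ⊆ ·)).card := by
  refine card_nbij' (insert u) (erase · u) (fun η hη => ?_) (fun τ hτ => ?_)
    (fun η hη => ?_) (fun τ hτ => ?_)
  · simp only [coe_filter, Set.mem_ofPred_eq, mem_simps, mem_lk_singleton] at hη ⊢
    obtain ⟨⟨⟨-, huη, hη⟩, hcard⟩, heη⟩ := hη
    exact ⟨⟨hη, by rw [card_insert_of_notMem huη, hcard]⟩, insert_subset_insert u heη⟩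
  · simp only [coe_filter, Set.mem_ofPred_eq, mem_simps] at hτ ⊢
    obtain ⟨⟨hτ, hcard⟩, heτ⟩ := hτ
    have huτ : u ∈ τ := heτ (mem_insert_self u e)
    refine ⟨⟨erase_mem_lk_singleton hτ huτ (by omega), by rw [card_erase_of_mem huτ, hcard]; rfl⟩,
      subset_erase.mpr ⟨(subset_insert u e).trans heτ, hue⟩⟩
  · simp only [coe_filter, Set.mem_ofPred_eq, mem_simps, mem_lk_singleton] at hη
    exact erase_insert hη.1.1.2.1
  · simp only [coe_filter, Set.mem_ofPred_eq, mem_simps] at hτ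
    exact insert_erase (hτ.2 (mem_insert_self u e))

lemma IsPureOfRank.card_filter_pos (hX : X.IsPureOfRank n) (hσ : σ ∈ X.faces) (hn : 1 ≤ n) :
    0 < ((X.simps (n - 1)).filter (σ ⊆ ·)).card := by
  obtain ⟨τ, hτ, hστ, hcard⟩ := hX.2 σ hσ
  exact card_pos.mpr ⟨τ, mem_filter.mpr ⟨mem_simps.mpr ⟨hτ, by omega⟩, hστ⟩⟩

lemma IsPureOfRank.weight_singleton_mul_weight_lk (hX : X.IsPureOfRank n)
    (he : e ∈ (X.lk {u}).faces) :
    X.weight {u} * (X.lk {u}).weight e = X.weight (insert u e) / (e.card + 1) := by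
  obtain ⟨hne, hue, hface⟩ := mem_lk_singleton.mp he
  have hu : {u} ∈ X.faces := X.down_closed _ hface {u} (by simp) (singleton_nonempty u)
  have hcard : e.card + 1 ≤ n := by
    simpa [card_insert_of_notMem hue] using hX.card_le hface
  obtain ⟨k, rfl⟩ : ∃ k, n = k + 2 := ⟨n - 2, by have := hne.card_pos; omega⟩
  have hlk_top : ((X.lk {u}).simps k).card = ((X.simps (k + 1)).filter ({u} ⊆ ·)).card := by
    simpa using card_filter_simps_lk_singleton (X := X) (notMem_empty u) k
  have hdeg_u : 0 < ((X.simps (k + 1)).filter ({u} ⊆ ·)).card := hX.card_filter_pos hu (by omega)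
  have htop : 0 < (X.simps (k + 1)).card := hdeg_u.trans_le (card_filter_le _ _)
  have hchoose : ((k + 2) * (k + 1).choose e.card : ℝ) =
      (k + 2).choose (e.card + 1) * (e.card + 1) := by
    exact_mod_cast Nat.add_one_mul_choose_eq (k + 1) e.card
  have hchoose_pos : (0 : ℝ) < (k + 1).choose e.card := by
    exact_mod_cast Nat.choose_pos (by omega)
  have hchoose_pos' : (0 : ℝ) < (k + 2).choose (e.card + 1) := by
    exact_mod_cast Nat.choose_pos (by omega)
  have hrank : X.rank = k + 2 := hX.rank_eq
  have hrank_lk : (X.lk {u}).rank = k + 1 := (hX.lk_singleton hu (by omega)).rank_eq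
  rw [weight, weight, weight, hrank, hrank_lk, Nat.add_sub_cancel, show k + 2 - 1 = k + 1 from rfl,
    card_filter_simps_lk_singleton hue, hlk_top, card_singleton, Nat.choose_one_right,
    card_insert_of_notMem hue]
  field_simp
  rw [mul_assoc, ← hchoose]
  push_cast
  ring

end SComplex

open scoped BigOperators in
lemma Finset.expect_le_of_nonneg {ι : Type*} {s : Finset ι} {f : ι → ℝ} {b : ℝ} (hb : 0 ≤ b)
    (hf : ∀ i ∈ s, f i ≤ b) : 𝔼 i ∈ s, f i ≤ b := by
  rcases s.eq_empty_or_nonempty with rfl | hs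
  · simpa using hb
  · exact expect_le hs hf

section D1Support

variable {G : Type*} [Group G]

lemma d1_rotate {ι : Type*} (φ : ι → ι → G) (u v w : ι) :
    d1 φ v w u = (φ u v)⁻¹ * d1 φ u v w * φ u v := by
  simp only [d1]
  group

lemma d1_rotate_ne_one {ι : Type*} {φ : ι → ι → G} {u v w : ι} (h : d1 φ u v w ≠ 1) :
    d1 φ v w u ≠ 1 := by
  rwa [d1_rotate, mul_assoc, Ne, inv_mul_eq_one, eq_comm, mul_eq_right]

open Classical in
/-- `normD1 X φ` is the total weight of `d1Support X φ`. -/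
noncomputable def d1Support (X : SComplex V) (φ : V → V → G) : Finset (Finset V) :=
  (X.simps 2).filter fun τ => ∃ u v w : V, τ = {u, v, w} ∧ d1 φ u v w ≠ 1

open Classical in
noncomputable def d1LinkSupport (X : SComplex V) (φ : V → V → G) (u : V) : Finset (Finset V) :=
  ((X.lk {u}).simps 1).filter fun e => ∃ v w : V, e = {v, w} ∧ d1 φ u v w ≠ 1

variable {φ : V → V → G} {X : SComplex V} {u : V} {τ e : Finset V}

lemma d1Support_subset : d1Support X φ ⊆ X.simps 2 := by
  classical exact filter_subset _ _

lemma d1LinkSupport_subset : d1LinkSupport X φ u ⊆ (X.lk {u}).simps 1 := by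
  classical exact filter_subset _ _

lemma exists_d1_ne_one_of_mem (h : ∃ a b c : V, τ = {a, b, c} ∧ d1 φ a b c ≠ 1) (hu : u ∈ τ) :
    ∃ v w : V, τ = {u, v, w} ∧ d1 φ u v w ≠ 1 := by
  obtain ⟨a, b, c, rfl, hd⟩ := h
  simp only [mem_insert, mem_singleton] at hu
  rcases hu with rfl | rfl | rfl
  · exact ⟨b, c, rfl, hd⟩
  · exact ⟨c, a, by rw [insert_comm, pair_comm], d1_rotate_ne_one hd⟩
  · exact ⟨a, b, by rw [pair_comm, insert_comm], d1_rotate_ne_one (d1_rotate_ne_one hd)⟩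

lemma insert_mem_d1Support (he : e ∈ d1LinkSupport X φ u) : insert u e ∈ d1Support X φ := by
  simp only [d1LinkSupport, d1Support, mem_filter, SComplex.mem_simps,
    SComplex.mem_lk_singleton] at he ⊢
  obtain ⟨⟨⟨-, hue, hface⟩, hcard⟩, v, w, rfl, hd⟩ := he
  exact ⟨⟨hface, by rw [card_insert_of_notMem hue, hcard]⟩, u, v, w, rfl, hd⟩

lemma erase_mem_d1LinkSupport (hτ : τ ∈ d1Support X φ) (hu : u ∈ τ) :
    τ.erase u ∈ d1LinkSupport X φ u := by
  simp only [d1LinkSupport, d1Support, mem_filter, SComplex.mem_simps] at hτ ⊢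
  obtain ⟨⟨hface, hcard⟩, hbad⟩ := hτ
  obtain ⟨v, w, rfl, hd⟩ := exists_d1_ne_one_of_mem hbad hu
  have hvw : u ∉ ({v, w} : Finset V) := fun h => by
    rw [insert_eq_of_mem h] at hcard
    exact absurd (card_le_two.trans_eq' hcard) (by omega)
  refine ⟨⟨SComplex.erase_mem_lk_singleton hface hu (by omega), ?_⟩, v, w, erase_insert hvw, hd⟩
  rw [card_erase_of_mem hu, hcard]

lemma sum_d1LinkSupport_insert {M : Type*} [AddCommMonoid M] (f : Finset V → M) (u : V) :
    ∑ e ∈ d1LinkSupport X φ u, f (insert u e) = ∑ τ ∈ (d1Support X φ).filter (u ∈ ·), f τ := by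
  refine sum_nbij' (insert u) (erase · u) (fun e he => ?_) (fun τ hτ => ?_)
    (fun e he => ?_) (fun τ hτ => ?_) fun _ _ => rfl
  · exact mem_filter.mpr ⟨insert_mem_d1Support he, mem_insert_self u e⟩
  · exact erase_mem_d1LinkSupport (mem_filter.mp hτ).1 (mem_filter.mp hτ).2
  · simp only [d1LinkSupport, mem_filter, SComplex.mem_simps, SComplex.mem_lk_singleton] at he
    exact erase_insert he.1.1.2.1
  · exact insert_erase (mem_filter.mp hτ).2

end D1Support

section DoubleCounting

variable [Fintype V] {G : Type*} [Group G] {X : SComplex V} {φ : V → V → G}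

lemma sum_verts_sum_d1LinkSupport {M : Type*} [AddCommMonoid M] (f : Finset V → M) :
    ∑ u ∈ X.verts, ∑ e ∈ d1LinkSupport X φ u, f (insert u e) = ∑ τ ∈ d1Support X φ, 3 • f τ := by
  simp_rw [sum_d1LinkSupport_insert]
  rw [sum_comm' (t' := d1Support X φ) (s' := id) fun u τ => ?_]
  · refine sum_congr rfl fun τ hτ => ?_
    rw [id, sum_const, (SComplex.mem_simps.mp (d1Support_subset hτ)).2]
  · simp only [mem_filter, id, SComplex.mem_verts]
    refine ⟨fun ⟨_, hτ, hu⟩ => ⟨hu, hτ⟩, fun ⟨hu, hτ⟩ => ⟨?_, hτ, hu⟩⟩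
    exact X.down_closed τ (SComplex.mem_simps.mp (d1Support_subset hτ)).1 {u}
      (singleton_subset_iff.mpr hu) (singleton_nonempty u)

lemma normD1_eq_sum_weight_mul {n : ℕ} (hX : X.IsPureOfRank n) :
    normD1 X φ = ∑ u ∈ X.verts, X.weight {u} * ∑ e ∈ d1LinkSupport X φ u, (X.lk {u}).weight e := by
  have hlocal : ∀ u, X.weight {u} * ∑ e ∈ d1LinkSupport X φ u, (X.lk {u}).weight e =
      ∑ e ∈ d1LinkSupport X φ u, X.weight (insert u e) / 3 := fun u => by
    rw [mul_sum]
    refine sum_congr rfl fun e he => ?_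
    have he' := SComplex.mem_simps.mp (d1LinkSupport_subset he)
    rw [hX.weight_singleton_mul_weight_lk he'.1, he'.2]
    norm_num
  simp_rw [hlocal, sum_verts_sum_d1LinkSupport fun τ => X.weight τ / 3, nsmul_eq_mul]
  simp only [Nat.cast_ofNat, mul_div_cancel₀ _ (three_ne_zero (α := ℝ))]
  rfl

end DoubleCounting

section Cover

variable [Fintype V] {G : Type*} [Group G] {S : Type*} [Fintype S] [DecidableEq S]
  [MulAction G S] {X : SComplex V} {φ : V → V → G}

lemma mem_Ycomplex_faces {σ : Finset (V × S)} :
    σ ∈ (Ycomplex X φ S).faces ↔ σ.image Prod.fst ∈ X.faces ∧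
      (σ.image Prod.fst).card = σ.card ∧ ∀ p ∈ σ, ∀ q ∈ σ, p.1 ≠ q.1 → p.2 = φ p.1 q.1 • q.2 := by
  simp [Ycomplex]

lemma image_graph_mem_Ycomplex {σ : Finset V} (hσ : σ ∈ X.faces) {g : V → S}
    (hg : ∀ x ∈ σ, ∀ y ∈ σ, x ≠ y → g x = φ x y • g y) :
    σ.image (fun x => (x, g x)) ∈ (Ycomplex X φ S).faces := by
  have hinj : Function.Injective fun x => (x, g x) := fun x y h => congrArg Prod.fst h
  have hbase : (σ.image fun x => (x, g x)).image Prod.fst = σ := by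
    rw [image_image]
    exact image_id
  refine mem_Ycomplex_faces.mpr ⟨by rwa [hbase], by rw [hbase, card_image_of_injective _ hinj], ?_⟩
  simp only [mem_image]
  rintro _ ⟨x, hx, rfl⟩ _ ⟨y, hy, rfl⟩ hxy
  exact hg x hx y hy hxy

lemma exists_lk_lift_of_d1_eq_one (hφ : IsCochain G φ) {u v w : V}
    (hface : insert u {v, w} ∈ X.faces) (hu : u ∉ ({v, w} : Finset V)) (hd : d1 φ u v w = 1)
    (s : S) : ∃ η ∈ ((Ycomplex X φ S).lk {(u, s)}).faces, η.image Prod.fst = {v, w} := by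
  have huv : v ≠ u := fun h => hu (by simp [h])
  have huw : w ≠ u := fun h => hu (by simp [h])
  have hcancel : ∀ x y, φ x y * φ y x = 1 := fun x y => by rw [hφ x y, inv_mul_cancel]
  have hvw : φ v w * φ w u = φ v u := by
    rw [d1, mul_assoc, mul_eq_one_iff_inv_eq] at hd
    exact hd.symm.trans (hφ v u).symm
  have hwv : φ w v * φ v u = φ w u := by
    rw [← hvw, ← mul_assoc, hcancel, one_mul]
  set g : V → S := Function.update (fun x => φ x u • s) u s
  have hg : ∀ x ∈ (insert u {v, w} : Finset V), ∀ y ∈ (insert u {v, w} : Finset V), x ≠ y →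
      g x = φ x y • g y := by
    intro x hx y hy hxy
    simp only [mem_insert, mem_singleton] at hx hy
    rcases hx with rfl | rfl | rfl <;> rcases hy with rfl | rfl | rfl <;>
      simp_all [g, smul_smul]
  refine ⟨({v, w} : Finset V).image fun x => (x, g x),
    SComplex.mem_lk_singleton.mpr ⟨by simp, ?_, ?_⟩, by rw [image_image]; exact image_id⟩
  · simp [huv.symm, huw.symm]
  · have hlift := image_graph_mem_Ycomplex hface hg
    rwa [image_insert, show g u = s by simp [g]] at hlift

lemma Dset_Ycomplex_subset (hφ : IsCochain G φ) (u : V) (s : S) :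
    Dset (Ycomplex X φ S) X Prod.fst (u, s) ⊆ d1LinkSupport X φ u := by
  intro e he
  simp only [Dset, d1LinkSupport, mem_filter] at he ⊢
  obtain ⟨he, hnot_covered⟩ := he
  obtain ⟨hlk, hcard⟩ := SComplex.mem_simps.mp he
  obtain ⟨v, w, -, rfl⟩ := card_eq_two.mp hcard
  obtain ⟨-, hu, hface⟩ := SComplex.mem_lk_singleton.mp hlk
  exact ⟨he, v, w, rfl, fun hd => hnot_covered (exists_lk_lift_of_d1_eq_one hφ hface hu hd s)⟩

lemma locDef_Ycomplex_le (hφ : IsCochain G φ) (u : V) (s : S) :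
    locDef (Ycomplex X φ S) X Prod.fst (u, s) ≤
      ∑ e ∈ d1LinkSupport X φ u, (X.lk {u}).weight e :=
  sum_le_sum_of_subset_of_nonneg (Dset_Ycomplex_subset hφ u s) fun _ _ _ =>
    SComplex.weight_nonneg _

lemma deficiency_Ycomplex_le (hφ : IsCochain G φ) :
    deficiency (Ycomplex X φ S) X Prod.fst ≤
      ∑ u ∈ X.verts, X.weight {u} * ∑ e ∈ d1LinkSupport X φ u, (X.lk {u}).weight e := by
  refine sum_le_sum fun u _ => ?_
  rw [div_mul_eq_mul_div, mul_div_assoc, ← expect_eq_sum_div_card]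
  refine mul_le_mul_of_nonneg_left (expect_le_of_nonneg
    (sum_nonneg fun _ _ => SComplex.weight_nonneg _) fun ut hut => ?_) (SComplex.weight_nonneg _)
  obtain ⟨v, s⟩ := ut
  obtain rfl : v = u := (mem_filter.mp hut).2
  exact locDef_Ycomplex_le hφ v s

end Cover

theorem deficiency_le_normD1_general
    {V : Type*} [Fintype V] [DecidableEq V]
    {G : Type*} [Group G] {S : Type*} [Fintype S] [DecidableEq S]
    [MulAction G S]
    (X : SComplex V) (n : ℕ) (hpure : X.IsPureOfRank n)
    (φ : V → V → G) (hφ : IsCochain G φ) :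
    deficiency (Ycomplex X φ S) X Prod.fst ≤ normD1 X φ :=
  (deficiency_Ycomplex_le hφ).trans_eq (normD1_eq_sum_weight_mul hpure).symm

/-- the deficiency of `Y_φ` is at most `‖d₁φ‖`. -/
theorem deficiency_le_normD1
    {V : Type*} [Fintype V] [DecidableEq V]
    {G : Type*} [Group G] {S : Type*} [Fintype S] [DecidableEq S] [Nonempty S]
    [MulAction G S]
    (X : SComplex V) (n : ℕ) (hn : 3 ≤ n) (hpure : X.IsPureOfRank n)
    (φ : V → V → G) (hφ : IsCochain G φ) :
    deficiency (Ycomplex X φ S) X Prod.fst ≤ normD1 X φ :=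
  deficiency_le_normD1_general X n hpure φ hφ
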